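/- Fix β ∈ ℕ with β ≥ 1 and θ > 0, and consider the generalized normal density on ℝ, q_θ(x) = (β θ^{1/(2β)}/Γ(1/(2β))) exp(−θ x^{2β}). Then the function Φ_θ(x) := −x²/(4βθ) + Γ(3/(2β)) / (4β θ^{1+1/β} Γ(1/(2β))) satisfies: (i) A_θ(Φ_θ′)(x) = −∂_θ log q_θ(x) = x^{2β} − 1/(2βθ) for all x ∈ ℝ; and (ii) E_θ[Φ_θ] = 0, using the second moment E_θ[X²] = θ^{−1/β} Γ(3/(2β))/Γ(1/(2β)). Hence Φ_θ is the Wasserstein score function of the scale parameter θ. -/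

import Mathlib

open MeasureTheory Real

/-- One-dimensional divergence-based Stein operator `A_q f = (q f)′ / q`. -/
noncomputable def stein1 (q f : ℝ → ℝ) (x : ℝ) : ℝ :=
  deriv (fun y => q y * f y) x / q x

/-- Generalized normal density `q_θ(x) = β θ^{1/(2β)}/Γ(1/(2β)) · exp(−θ x^{2β})`. -/
noncomputable def gnDens (β : ℕ) (θ x : ℝ) : ℝ :=
  (β : ℝ) * θ ^ (1 / (2 * (β : ℝ))) / Real.Gamma (1 / (2 * (β : ℝ)))
    * Real.exp (-θ * x ^ (2 * β))

/-!
For a density of the form `c · exp g` the Stein operator is `A f = f′ + f g′`; with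
`g = −θ x^{2β}` and `f = Φ_θ′ = −x/(2βθ)` this gives `x^{2β} − 1/(2βθ)`, which is also
`−∂_θ log q_θ`. By evenness, every moment reduces to the half-line integral
`∫₀^∞ x^k exp(−θ x^p) dx = θ^{−(k+1)/p} Γ((k+1)/p)/p`; the moment `k = 0` is the
normalisation `E_θ[1] = 1`, and `E_θ[Φ_θ] = 0` is then linear in `E_θ[X²]` and `E_θ[1]`.
-/

open Set

/-- The Wasserstein score `Φ_θ` of the scale parameter. -/
noncomputable def gnScore (β : ℕ) (θ y : ℝ) : ℝ :=
  -y ^ 2 / (4 * (β : ℝ) * θ)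
    + Real.Gamma (3 / (2 * (β : ℝ)))
      / (4 * (β : ℝ) * θ ^ (1 + 1 / (β : ℝ)) * Real.Gamma (1 / (2 * (β : ℝ))))

lemma stein1_const_mul_exp {c : ℝ} (hc : c ≠ 0) {g f : ℝ → ℝ} {x g' f' : ℝ}
    (hg : HasDerivAt g g' x) (hf : HasDerivAt f f' x) :
    stein1 (fun y => c * exp (g y)) f x = f' + f x * g' := by
  rw [stein1, ((hg.exp.const_mul c).fun_mul hf).deriv]
  field_simp
  ring

lemma integrable_comp_abs_of_integrableOn_Ioi {E : Type*} [NormedAddCommGroup E] {f : ℝ → E}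
    (hf : IntegrableOn f (Ioi 0)) : Integrable (fun x => f |x|) := by
  have on_Ioi : IntegrableOn (fun x => f |x|) (Ioi 0) :=
    hf.congr_fun (fun x hx => by rw [abs_of_pos hx]) measurableSet_Ioi
  have on_Iic : IntegrableOn (fun x => f |x|) (Iic 0) := by
    have neg_emb : MeasurableEmbedding fun x : ℝ => -x := (Homeomorph.neg ℝ).measurableEmbedding
    rw [← Measure.map_neg_eq_self (volume : Measure ℝ), neg_emb.integrableOn_map_iff]
    simp_rw [Function.comp_def, abs_neg, neg_preimage, neg_Iic, neg_zero]
    exact (integrableOn_Ici_iff_integrableOn_Ioi).mpr on_Ioi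
  simpa only [Iic_union_Ioi, integrableOn_univ] using on_Iic.union on_Ioi

lemma exp_neg_mul_pow_mul_pow_eq_rpow (θ x : ℝ) (n k : ℕ) :
    exp (-θ * x ^ n) * x ^ k = x ^ (k : ℝ) * exp (-θ * x ^ (n : ℝ)) := by
  rw [rpow_natCast, rpow_natCast, mul_comm]

lemma exp_neg_mul_pow_mul_pow_eq_comp_abs (θ : ℝ) (n : ℕ) {k : ℕ} (hk : Even k) :
    (fun x : ℝ => exp (-θ * x ^ (2 * n)) * x ^ k)
      = fun x => exp (-θ * |x| ^ (2 * n)) * |x| ^ k := by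
  simp only [(even_two_mul n).pow_abs, hk.pow_abs]

section EvenMoments

variable {n k : ℕ} {θ : ℝ}

lemma integrable_exp_neg_mul_pow_mul_pow (hn : n ≠ 0) (hθ : 0 < θ) (hk : Even k) :
    Integrable (fun x : ℝ => exp (-θ * x ^ (2 * n)) * x ^ k) := by
  have half : IntegrableOn (fun x : ℝ => exp (-θ * x ^ (2 * n)) * x ^ k) (Ioi 0) := by
    simp_rw [exp_neg_mul_pow_mul_pow_eq_rpow]
    exact integrableOn_rpow_mul_exp_neg_mul_rpow (by linarith [k.cast_nonneg (α := ℝ)])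
      (by positivity) hθ
  rw [exp_neg_mul_pow_mul_pow_eq_comp_abs θ n hk]
  exact integrable_comp_abs_of_integrableOn_Ioi half

lemma integral_exp_neg_mul_pow_mul_pow (hn : n ≠ 0) (hθ : 0 < θ) (hk : Even k) :
    ∫ x : ℝ, exp (-θ * x ^ (2 * n)) * x ^ k
      = θ ^ (-((k : ℝ) + 1) / (2 * n)) * Gamma ((k + 1) / (2 * n)) / n := by
  rw [exp_neg_mul_pow_mul_pow_eq_comp_abs θ n hk,
    integral_comp_abs (f := fun x => exp (-θ * x ^ (2 * n)) * x ^ k)]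
  simp_rw [exp_neg_mul_pow_mul_pow_eq_rpow]
  rw [integral_rpow_mul_exp_neg_mul_rpow (by positivity)
    (by linarith [k.cast_nonneg (α := ℝ)]) hθ]
  push_cast
  field_simp

end EvenMoments

section GeneralizedNormal

variable {β k : ℕ} {θ : ℝ}

lemma integrable_gnDens_mul_pow (hβ : β ≠ 0) (hθ : 0 < θ) (hk : Even k) :
    Integrable (fun x => gnDens β θ x * x ^ k) := by
  simpa only [gnDens, mul_assoc]
    using (integrable_exp_neg_mul_pow_mul_pow hβ hθ hk).const_mul _

lemma integral_gnDens_mul_pow (hβ : β ≠ 0) (hθ : 0 < θ) (hk : Even k) :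
    ∫ x, gnDens β θ x * x ^ k
      = θ ^ (-(k : ℝ) / (2 * β)) * Gamma ((k + 1) / (2 * β)) / Gamma (1 / (2 * β)) := by
  simp only [gnDens, mul_assoc]
  rw [integral_const_mul, integral_exp_neg_mul_pow_mul_pow hβ hθ hk]
  have hθpow : θ ^ (1 / (2 * (β : ℝ))) * θ ^ (-((k : ℝ) + 1) / (2 * β))
      = θ ^ (-(k : ℝ) / (2 * β)) := by
    rw [← rpow_add hθ]
    ring_nf
  have hb : (β : ℝ) ≠ 0 := by exact_mod_cast hβ
  rw [← hθpow]
  field_simp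

lemma integral_gnDens (hβ : β ≠ 0) (hθ : 0 < θ) : ∫ x, gnDens β θ x = 1 := by
  have hΓ : Gamma (1 / (2 * (β : ℝ))) ≠ 0 := (Gamma_pos_of_pos (by positivity)).ne'
  have h := integral_gnDens_mul_pow hβ hθ (k := 0) Even.zero
  simp only [pow_zero, mul_one, CharP.cast_eq_zero, neg_zero, zero_div, rpow_zero, one_mul,
    zero_add] at h
  rw [h, div_self hΓ]

lemma integral_gnDens_mul_sq (hβ : β ≠ 0) (hθ : 0 < θ) :
    ∫ x, gnDens β θ x * x ^ 2
      = θ ^ (-(1 : ℝ) / β) * Gamma (3 / (2 * β)) / Gamma (1 / (2 * β)) := by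
  rw [integral_gnDens_mul_pow hβ hθ even_two]
  norm_num
  ring_nf

lemma hasDerivAt_log_gnDens (hβ : β ≠ 0) (hθ : 0 < θ) (x : ℝ) :
    HasDerivAt (fun t => log (gnDens β t x)) (1 / (2 * β * θ) - x ^ (2 * β)) θ := by
  have hΓ : 0 < Gamma (1 / (2 * (β : ℝ))) := Gamma_pos_of_pos (by positivity)
  have hb : (0 : ℝ) < β := by exact_mod_cast Nat.pos_of_ne_zero hβ
  have log_eq : (fun t => log (gnDens β t x)) =ᶠ[nhds θ] fun t =>
      log β + 1 / (2 * β) * log t - log (Gamma (1 / (2 * β))) - t * x ^ (2 * β) := by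
    filter_upwards [Ioi_mem_nhds hθ] with t (ht : 0 < t)
    rw [gnDens, log_mul (by positivity) (exp_ne_zero _), log_exp, log_div (by positivity) hΓ.ne',
      log_mul hb.ne' (by positivity), log_rpow ht]
    ring
  have hd := ((((hasDerivAt_log hθ.ne').const_mul (1 / (2 * (β : ℝ)))).const_add (log β)).sub_const
    (log (Gamma (1 / (2 * β))))).sub ((hasDerivAt_id θ).mul_const (x ^ (2 * β)))
  exact (hd.congr_of_eventuallyEq log_eq).congr_deriv (by ring)

lemma deriv_gnScore (β : ℕ) (θ : ℝ) : deriv (gnScore β θ) = fun y => -y / (2 * β * θ) := by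
  funext y
  have h : HasDerivAt (gnScore β θ) (-(↑2 * y ^ (2 - 1)) / (4 * β * θ)) y :=
    ((hasDerivAt_pow 2 y).neg.div_const _).add_const _
  rw [h.deriv]
  ring

lemma stein1_gnDens_deriv_gnScore (hβ : β ≠ 0) (hθ : 0 < θ) (x : ℝ) :
    stein1 (gnDens β θ) (deriv (gnScore β θ)) x = x ^ (2 * β) - 1 / (2 * β * θ) := by
  have hC : (β : ℝ) * θ ^ (1 / (2 * (β : ℝ))) / Gamma (1 / (2 * (β : ℝ))) ≠ 0 := by
    have : 0 < Gamma (1 / (2 * (β : ℝ))) := Gamma_pos_of_pos (by positivity)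
    positivity
  have hf : HasDerivAt (fun y => -y / (2 * β * θ)) (-1 / (2 * β * θ)) x :=
    (hasDerivAt_id x).neg.div_const _
  rw [deriv_gnScore]
  refine (stein1_const_mul_exp hC ((hasDerivAt_pow (2 * β) x).const_mul (-θ)) hf).trans ?_
  have hpow : x * x ^ (2 * β - 1) = x ^ (2 * β) := by
    rw [← pow_succ']
    congr 1
    omega
  have hb : (β : ℝ) ≠ 0 := by exact_mod_cast hβ
  push_cast
  field_simp
  linear_combination (2 * (β : ℝ) * θ) * hpow

lemma integral_gnDens_mul_gnScore (hβ : β ≠ 0) (hθ : 0 < θ) :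
    ∫ x, gnDens β θ x * gnScore β θ x = 0 := by
  set K := Gamma (3 / (2 * (β : ℝ)))
    / (4 * (β : ℝ) * θ ^ (1 + 1 / (β : ℝ)) * Gamma (1 / (2 * (β : ℝ)))) with hK
  have hsplit : ∫ x, gnDens β θ x * gnScore β θ x
      = -(1 / (4 * β * θ)) * (∫ x, gnDens β θ x * x ^ 2) + K * ∫ x, gnDens β θ x := by
    have hint : Integrable (gnDens β θ) := by
      simpa using integrable_gnDens_mul_pow hβ hθ Even.zero
    rw [← integral_const_mul, ← integral_const_mul,
      ← integral_add ((integrable_gnDens_mul_pow hβ hθ even_two).const_mul _) (hint.const_mul K)]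
    congr 1 with x
    rw [gnScore]
    ring
  have hΓ : 0 < Gamma (1 / (2 * (β : ℝ))) := Gamma_pos_of_pos (by positivity)
  have hb : (β : ℝ) ≠ 0 := by exact_mod_cast hβ
  have hroot : 0 < θ ^ ((1 : ℝ) / β) := rpow_pos_of_pos hθ _
  have hθ1 : θ ^ ((1 : ℝ) + 1 / β) = θ * θ ^ ((1 : ℝ) / β) := by
    rw [rpow_add hθ, rpow_one]
  have hθ2 : θ ^ (-(1 : ℝ) / β) = (θ ^ ((1 : ℝ) / β))⁻¹ := by
    rw [neg_div, rpow_neg hθ.le]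
  rw [hsplit, integral_gnDens_mul_sq hβ hθ, integral_gnDens hβ hθ, hK, hθ1, hθ2]
  field_simp
  ring

end GeneralizedNormal

/-- for the generalized normal distribution, the function
`Φ_θ(x) = −x²/(4βθ) + Γ(3/(2β))/(4β θ^{1+1/β} Γ(1/(2β)))` satisfies
(i) `A_θ(Φ_θ′)(x) = −∂_θ log q_θ(x) = x^{2β} − 1/(2βθ)` for all x, and
(ii) `E_θ[Φ_θ] = 0`, using `E_θ[X²] = θ^{−1/β} Γ(3/(2β))/Γ(1/(2β))`;
i.e. it is the Wasserstein score function of the scale parameter. -/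
theorem stmt15 (β : ℕ) (hβ : 1 ≤ β) (θ : ℝ) (hθ : 0 < θ) :
    (∀ x : ℝ,
        (stein1 (gnDens β θ)
            (deriv (fun y => -y ^ 2 / (4 * (β : ℝ) * θ)
              + Real.Gamma (3 / (2 * (β : ℝ)))
                / (4 * (β : ℝ) * θ ^ (1 + 1 / (β : ℝ)) * Real.Gamma (1 / (2 * (β : ℝ)))))) x
          = - deriv (fun t => Real.log (gnDens β t x)) θ)
        ∧ - deriv (fun t => Real.log (gnDens β t x)) θ
            = x ^ (2 * β) - 1 / (2 * (β : ℝ) * θ))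
    ∧ (∫ x : ℝ, gnDens β θ x * x ^ 2)
        = θ ^ (-(1 : ℝ) / (β : ℝ)) * Real.Gamma (3 / (2 * (β : ℝ)))
            / Real.Gamma (1 / (2 * (β : ℝ)))
    ∧ ∫ x : ℝ, gnDens β θ x * (-x ^ 2 / (4 * (β : ℝ) * θ)
        + Real.Gamma (3 / (2 * (β : ℝ)))
          / (4 * (β : ℝ) * θ ^ (1 + 1 / (β : ℝ)) * Real.Gamma (1 / (2 * (β : ℝ))))) = 0 := by
  have hβ0 : β ≠ 0 := by omega
  have neg_deriv_log (x : ℝ) : -deriv (fun t => log (gnDens β t x)) θ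
      = x ^ (2 * β) - 1 / (2 * β * θ) := by
    rw [(hasDerivAt_log_gnDens hβ0 hθ x).deriv, neg_sub]
  refine ⟨fun x => ⟨?_, neg_deriv_log x⟩, integral_gnDens_mul_sq hβ0 hθ,
    integral_gnDens_mul_gnScore hβ0 hθ⟩
  exact (stein1_gnDens_deriv_gnScore hβ0 hθ x).trans (neg_deriv_log x).symm
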